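/- arXiv:2507.13165 — 4 statements merged into one kernel-verified Lean document; each statement's English description precedes it below -/
import Mathlib

section
/- Let b be a positive integer, G a graph, and {X_1, …, X_m} a b-deficiency complete partition of V(G) with |X_i| ≥ mb + 2t for each i. Suppose C_1, …, C_t are cliques of G such that |C_i ∩ X_j| ≤ 2 for all i, j, and for each i there is at most one j with |C_i ∩ X_j| = 2. Then there exist cliques D_1, …, D_t of G such that: (1) C_i ⊆ D_i for each i; (2) the sets D_1 − C_1, …, D_t − C_t are pairwise disjoint; (3) for each i, |D_i ∩ X_j| = 1 for all j except possibly one index j at which |D_i ∩ X_j| = |C_i ∩ X_j| = 2. -/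
open SimpleGraph Finset

/-- Number of edges of a simple graph. -/
noncomputable def edgeCount {V : Type*} (G : SimpleGraph V) : ℕ := G.edgeSet.ncard

/-- `G` contains a copy of `H` (an injective graph homomorphism). -/
def HasCopy {W V : Type*} (H : SimpleGraph W) (G : SimpleGraph V) : Prop :=
  ∃ f : H →g G, Function.Injective f

/-- Turán number: maximum number of edges of an `H`-free graph on `n` vertices. -/
noncomputable def exNum (n : ℕ) {W : Type*} (H : SimpleGraph W) : ℕ :=
  sSup {m | ∃ G : SimpleGraph (Fin n), ¬ HasCopy H G ∧ m = edgeCount G}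

/-- The `(k,r)`-fan: `k` cliques of size `r` sharing exactly one common vertex `0`. -/
def fanGraph (k r : ℕ) : SimpleGraph (Fin ((r-1)*k+1)) :=
  SimpleGraph.fromRel (fun u v =>
    u = 0 ∨ v = 0 ∨ (u.val - 1) / (r - 1) = (v.val - 1) / (r - 1))

/-- Matching number of a graph. -/
noncomputable def matchNum {V : Type*} (G : SimpleGraph V) : ℕ :=
  sSup {m | ∃ M : SimpleGraph.Subgraph G, M.IsMatching ∧ m = M.edgeSet.ncard}

/-- `fMax ν Δ` : maximum number of edges of a graph with matching number at most `ν`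
and maximum degree at most `Δ`. -/
noncomputable def fMax (ν Δ : ℕ) : ℕ :=
  sSup {m | ∃ (n : ℕ) (G : SimpleGraph (Fin n)), matchNum G ≤ ν ∧
    (∀ v, (G.neighborSet v).ncard ≤ Δ) ∧ m = edgeCount G}

/-- There is a rainbow copy of `H` in `G` under the edge-coloring `c`. -/
def HasRainbowCopy {W V : Type*} (c : Sym2 V → ℕ) (H : SimpleGraph W) (G : SimpleGraph V) : Prop :=
  ∃ f : H →g G, Function.Injective f ∧
    ∀ e₁ ∈ H.edgeSet, ∀ e₂ ∈ H.edgeSet, c (e₁.map f) = c (e₂.map f) → e₁ = e₂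

/-- Anti-Ramsey number: least (positive) number `r` of colors such that every edge-coloring
of `K_n` using exactly `r` colors contains a rainbow copy of `H`. -/
noncomputable def antiRamsey (n : ℕ) {W : Type*} (H : SimpleGraph W) : ℕ :=
  sInf {r | 0 < r ∧ ∀ c : Sym2 (Fin n) → ℕ,
    (c '' (⊤ : SimpleGraph (Fin n)).edgeSet).ncard = r →
    HasRainbowCopy c H (⊤ : SimpleGraph (Fin n))}

/-
Greedy completion.  Treat the cliques one after another and, inside a clique, the classes it
misses one after another.  A clique `K` that misses a class has at most `m` vertices, each lying
in another class and so having at most `b` non-neighbours in the missing class `X j`; at most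
`t - 1` vertices of `X j` were already spent on earlier cliques, and `m * b + (t - 1) < |X j|`,
so some unused vertex of `X j` is adjacent to all of `K` and can be added.
-/

open Function

theorem Fin.pairwise_of_zero_of_succ {α : Type*} {n : ℕ} {r : α → α → Prop} [Std.Symm r]
    {f : Fin (n + 1) → α} (h0 : ∀ i : Fin n, r (f 0) (f i.succ))
    (hsucc : Pairwise (r on fun i : Fin n => f i.succ)) : Pairwise (r on f) := by
  intro i j hij
  cases i using Fin.cases <;> cases j using Fin.cases
  · exact absurd rfl hij
  · exact h0 _
  · exact Std.Symm.symm _ _ (h0 _)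
  · exact hsucc fun h => hij (congrArg Fin.succ h)

section FillsMissingClasses

variable {V ι : Type*} [DecidableEq V] {X : ι → Finset V}

def FillsMissingClasses (X : ι → Finset V) (K D : Finset V) : Prop :=
  K ⊆ D ∧ ∀ j, (K ∩ X j = ∅ → #(D ∩ X j) = 1) ∧ (K ∩ X j ≠ ∅ → D ∩ X j = K ∩ X j)

theorem FillsMissingClasses.card_sdiff_inter_le_one {K D : Finset V}
    (h : FillsMissingClasses X K D) (j : ι) : #((D \ K) ∩ X j) ≤ 1 := by
  by_cases hj : K ∩ X j = ∅
  · calc #((D \ K) ∩ X j) ≤ #(D ∩ X j) := card_le_card (inter_subset_inter_right sdiff_subset)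
      _ = 1 := (h.2 j).1 hj
  · rw [sdiff_inter_right_comm, (h.2 j).2 hj, sdiff_eq_empty_iff_subset.mpr inter_subset_left]
    simp

theorem FillsMissingClasses.card_inter_eq_one {K D : Finset V} (h : FillsMissingClasses X K D)
    {j : ι} (hj : #(K ∩ X j) ≤ 1) : #(D ∩ X j) = 1 := by
  by_cases h0 : K ∩ X j = ∅
  · exact (h.2 j).1 h0
  · rw [(h.2 j).2 h0]
    have := card_pos.mpr (nonempty_iff_ne_empty.mpr h0)
    omega

theorem FillsMissingClasses.card_inter_eq_one_or {K D : Finset V} (h : FillsMissingClasses X K D)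
    (h2 : ∀ j, #(K ∩ X j) ≤ 2) (h2' : ∀ j j', #(K ∩ X j) = 2 → #(K ∩ X j') = 2 → j = j') :
    (∀ j, #(D ∩ X j) = 1) ∨
      ∃ j₀, #(D ∩ X j₀) = 2 ∧ #(K ∩ X j₀) = 2 ∧ ∀ j, j ≠ j₀ → #(D ∩ X j) = 1 := by
  by_cases hex : ∃ j₀, #(K ∩ X j₀) = 2
  · obtain ⟨j₀, hj₀⟩ := hex
    refine Or.inr ⟨j₀, ?_, hj₀, fun j hj => h.card_inter_eq_one ?_⟩
    · rwa [(h.2 j₀).2 fun h0 => by simp [h0] at hj₀]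
    · have : #(K ∩ X j) ≠ 2 := fun e => hj (h2' j j₀ e hj₀)
      have := h2 j
      omega
  · refine Or.inl fun j => h.card_inter_eq_one ?_
    have : #(K ∩ X j) ≠ 2 := fun e => hex ⟨j, e⟩
    have := h2 j
    omega

theorem card_add_card_filter_inter_eq_empty_le [Fintype ι] (hcover : ∀ v, ∃ j, v ∈ X j)
    {K : Finset V} (h2 : ∀ j, #(K ∩ X j) ≤ 2)
    (h2' : ∀ j j', #(K ∩ X j) = 2 → #(K ∩ X j') = 2 → j = j') :
    #K + #{j | K ∩ X j = ∅} ≤ Fintype.card ι + 1 := by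
  have hK : #K ≤ ∑ j, #(K ∩ X j) := calc
    #K ≤ #(univ.biUnion fun j => K ∩ X j) := card_le_card fun y hy => by
      obtain ⟨j, hj⟩ := hcover y
      exact mem_biUnion.mpr ⟨j, mem_univ _, mem_inter.mpr ⟨hy, hj⟩⟩
    _ ≤ ∑ j, #(K ∩ X j) := card_biUnion_le
  have htwo : #{j | #(K ∩ X j) = 2} ≤ 1 := card_le_one.mpr fun j hj j' hj' =>
    h2' j j' (mem_filter.mp hj).2 (mem_filter.mp hj').2
  have hsum : ∑ j, #(K ∩ X j) + #{j | #(K ∩ X j) = 0} ≤ ∑ _j : ι, 1 + #{j | #(K ∩ X j) = 2} := by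
    rw [card_filter, card_filter, ← sum_add_distrib, ← sum_add_distrib]
    refine sum_le_sum fun j _ => ?_
    have := h2 j
    split_ifs <;> omega
  simp only [card_eq_zero, sum_const, card_univ, smul_eq_mul, mul_one] at hsum
  omega

end FillsMissingClasses

namespace SimpleGraph

variable {V ι : Type*} [DecidableEq V] (G : SimpleGraph V) {X : ι → Finset V}

theorem exists_mem_notMem_forall_adj {b : ℕ} {S F K : Finset V}
    (hK : ∀ y ∈ K, #S - b ≤ ((S : Set V) ∩ G.neighborSet y).ncard)
    (hS : #(F ∩ S) + #K * b < #S) : ∃ v ∈ S, v ∉ F ∧ ∀ y ∈ K, G.Adj y v := by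
  classical
  have hnonadj : ∀ y ∈ K, #{v ∈ S | ¬ G.Adj y v} ≤ b := by
    intro y hy
    have hadj : ((S : Set V) ∩ G.neighborSet y).ncard = #{v ∈ S | G.Adj y v} := by
      rw [← Set.ncard_coe_finset, coe_filter]
      rfl
    have h1 := card_filter_add_card_filter_not (s := S) (p := fun v => G.Adj y v)
    have h2 := hK y hy
    omega
  set Bad := (F ∩ S) ∪ K.biUnion fun y => {v ∈ S | ¬ G.Adj y v}
  have hBad : #Bad < #S := calc
    #Bad ≤ #(F ∩ S) + ∑ y ∈ K, #{v ∈ S | ¬ G.Adj y v} :=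
      (card_union_le _ _).trans (Nat.add_le_add_left card_biUnion_le _)
    _ ≤ #(F ∩ S) + #K * b := Nat.add_le_add_left (sum_le_card_nsmul _ _ _ hnonadj) _
    _ < #S := hS
  obtain ⟨v, hvS, hvBad⟩ := exists_mem_notMem_of_card_lt_card hBad
  refine ⟨v, hvS, fun hvF => hvBad (mem_union_left _ (mem_inter.mpr ⟨hvF, hvS⟩)), ?_⟩
  intro y hy
  by_contra hyv
  exact hvBad (mem_union_right _ (mem_biUnion.mpr ⟨y, hy, mem_filter.mpr ⟨hvS, hyv⟩⟩))

theorem exists_isClique_superset_card_inter_eq_one [DecidableEq ι] (hX : Pairwise (Disjoint on X))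
    {b n : ℕ} (hnonadj : ∀ j, ∀ y ∉ X j, #(X j) - b ≤ ((X j : Set V) ∩ G.neighborSet y).ncard)
    {F : Finset V} (hF : ∀ j, #(F ∩ X j) + n * b < #(X j)) (S : Finset ι) :
    ∀ K : Finset V, G.IsClique (K : Set V) → (∀ j ∈ S, K ∩ X j = ∅) → #K + #S ≤ n + 1 →
      ∃ D, K ⊆ D ∧ G.IsClique (D : Set V) ∧ Disjoint (D \ K) F ∧
        (∀ j ∈ S, #(D ∩ X j) = 1) ∧ ∀ j ∉ S, D ∩ X j = K ∩ X j := by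
  induction S using Finset.induction_on with
  | empty => exact fun K hK _ _ => ⟨K, subset_rfl, hK, by simp, by simp, fun _ _ => rfl⟩
  | insert j₀ S hj₀S ih =>
    intro K hK hKS hcard
    rw [card_insert_of_notMem hj₀S] at hcard
    have hKj₀ := hKS j₀ (mem_insert_self _ _)
    obtain ⟨v, hvX, hvF, hvK⟩ := G.exists_mem_notMem_forall_adj (S := X j₀) (F := F) (K := K)
      (fun y hy => hnonadj j₀ y fun hyX => by simpa [hKj₀] using mem_inter.mpr ⟨hy, hyX⟩)
      (lt_of_le_of_lt (by gcongr; omega) (hF j₀))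
    have hvXj : ∀ j ≠ j₀, v ∉ X j := fun j hj hvj =>
      Finset.disjoint_left.mp (hX hj.symm) hvX hvj
    have hvK' : v ∉ K := fun h => (hvK v h).ne rfl
    obtain ⟨D, hKD, hD, hDF, hDS, hDS'⟩ := ih (insert v K)
      (by rw [coe_insert]; exact hK.insert fun y hy _ => (hvK y hy).symm)
      (fun j hj => by
        rw [insert_inter_of_notMem (hvXj j (ne_of_mem_of_not_mem hj hj₀S)),
          hKS j (mem_insert_of_mem hj)])
      (by rw [card_insert_of_notMem hvK']; omega)
    refine ⟨D, (subset_insert _ _).trans hKD, hD, ?_, ?_, ?_⟩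
    · refine Finset.disjoint_left.mpr fun x hx hxF => ?_
      obtain rfl | hxv := eq_or_ne x v
      · exact hvF hxF
      · exact Finset.disjoint_left.mp hDF (by simp_all) hxF
    · intro j hj
      obtain rfl | hj := mem_insert.mp hj
      · rw [hDS' j hj₀S, insert_inter_of_mem hvX, hKj₀, insert_empty, card_singleton]
      · exact hDS j hj
    · intro j hj
      rw [hDS' j (fun h => hj (mem_insert_of_mem h)),
        insert_inter_of_notMem (hvXj j fun h => hj (h ▸ mem_insert_self _ _))]

theorem exists_isClique_fillsMissingClasses [Fintype ι] [DecidableEq ι]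
    (hX : Pairwise (Disjoint on X)) {b n : ℕ}
    (hnonadj : ∀ j, ∀ y ∉ X j, #(X j) - b ≤ ((X j : Set V) ∩ G.neighborSet y).ncard)
    {F : Finset V} (hF : ∀ j, #(F ∩ X j) + n * b < #(X j)) {K : Finset V}
    (hK : G.IsClique (K : Set V)) (hcard : #K + #{j | K ∩ X j = ∅} ≤ n + 1) :
    ∃ D : Finset V, G.IsClique (D : Set V) ∧ FillsMissingClasses X K D ∧ Disjoint (D \ K) F := by
  obtain ⟨D, hKD, hD, hDF, hmiss, hmet⟩ :=
    G.exists_isClique_superset_card_inter_eq_one hX hnonadj hF {j | K ∩ X j = ∅} K hK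
      (by simp) hcard
  exact ⟨D, hD, ⟨hKD, fun j => ⟨fun h => hmiss j (by simpa), fun h => hmet j (by simpa)⟩⟩, hDF⟩

theorem exists_isClique_fillsMissingClasses_family [Fintype ι] [DecidableEq ι]
    (hX : Pairwise (Disjoint on X)) {b n : ℕ}
    (hnonadj : ∀ j, ∀ y ∉ X j, #(X j) - b ≤ ((X j : Set V) ∩ G.neighborSet y).ncard) :
    ∀ (t : ℕ) (C : Fin t → Finset V) (F : Finset V), (∀ j, #(F ∩ X j) + t + n * b ≤ #(X j)) →
      (∀ i, G.IsClique (C i : Set V) ∧ #(C i) + #{j | C i ∩ X j = ∅} ≤ n + 1) →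
      ∃ D : Fin t → Finset V,
        (∀ i, G.IsClique (D i : Set V) ∧ FillsMissingClasses X (C i) (D i) ∧
          Disjoint (D i \ C i) F) ∧
        Pairwise (Disjoint on fun i => D i \ C i) := by
  intro t
  induction t with
  | zero => exact fun _ _ _ _ => ⟨fun i => i.elim0, fun i => i.elim0, fun i => i.elim0⟩
  | succ t ih =>
    intro C F hF hC
    rw [Fin.forall_fin_succ] at hC
    obtain ⟨D₀, hD₀, hfill₀, hD₀F⟩ := G.exists_isClique_fillsMissingClasses hX hnonadj (F := F)
      (fun j => by have := hF j; omega) hC.1.1 hC.1.2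
    have hF' : ∀ j, #((F ∪ (D₀ \ C 0)) ∩ X j) + t + n * b ≤ #(X j) := fun j => by
      have : #((F ∪ (D₀ \ C 0)) ∩ X j) ≤ #(F ∩ X j) + #((D₀ \ C 0) ∩ X j) := by
        rw [union_inter_distrib_right]
        exact card_union_le _ _
      have := hfill₀.card_sdiff_inter_le_one j
      have := hF j
      omega
    obtain ⟨D', hD', hD'disj⟩ := ih (fun i => C i.succ) _ hF' hC.2
    refine ⟨Fin.cons D₀ D', ?_, ?_⟩
    · rw [Fin.forall_fin_succ]
      simp only [Fin.cons_zero, Fin.cons_succ]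
      exact ⟨⟨hD₀, hfill₀, hD₀F⟩, fun i =>
        ⟨(hD' i).1, (hD' i).2.1, (hD' i).2.2.mono_right subset_union_left⟩⟩
    · refine Fin.pairwise_of_zero_of_succ (fun i => ?_) (by simpa using hD'disj)
      simp only [Fin.cons_zero, Fin.cons_succ]
      exact ((hD' i).2.2.mono_right subset_union_right).symm

end SimpleGraph

theorem extend_cliques_general {V : Type*} [DecidableEq V] (G : SimpleGraph V)
    (b m t : ℕ) (X : Fin m → Finset V)
    (hdisj : ∀ i j, i ≠ j → Disjoint (X i) (X j))
    (hcover : ∀ v, ∃ i, v ∈ X i)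
    (hdom : ∀ i j, i ≠ j → ∀ x ∈ X i,
      (X j).card - b ≤ ((X j : Set V) ∩ G.neighborSet x).ncard)
    (hsize : ∀ i, m * b + 2 * t ≤ (X i).card)
    (C : Fin t → Finset V) (hC : ∀ i, G.IsClique (C i : Set V))
    (hC2 : ∀ i j, (C i ∩ X j).card ≤ 2)
    (hC2' : ∀ i j j', (C i ∩ X j).card = 2 → (C i ∩ X j').card = 2 → j = j') :
    ∃ D : Fin t → Finset V,
      (∀ i, G.IsClique (D i : Set V)) ∧
      (∀ i, C i ⊆ D i) ∧
      (∀ i j, i ≠ j → Disjoint (D i \ C i) (D j \ C j)) ∧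
      (∀ i, (∀ j, (D i ∩ X j).card = 1) ∨
        ∃ j₀, (D i ∩ X j₀).card = 2 ∧ (C i ∩ X j₀).card = 2 ∧
          ∀ j, j ≠ j₀ → (D i ∩ X j).card = 1) := by
  have hnonadj : ∀ j, ∀ y ∉ X j, #(X j) - b ≤ ((X j : Set V) ∩ G.neighborSet y).ncard :=
    fun j y hy => by
      obtain ⟨i, hi⟩ := hcover y
      exact hdom i j (by rintro rfl; exact hy hi) y hi
  obtain ⟨D, hD, hDdisj⟩ := G.exists_isClique_fillsMissingClasses_family
    (fun i j h => hdisj i j h) hnonadj (n := m) t C ∅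
    (fun j => by have := hsize j; simp only [empty_inter, card_empty]; omega)
    (fun i => ⟨hC i, by simpa using card_add_card_filter_inter_eq_empty_le hcover (hC2 i) (hC2' i)⟩)
  exact ⟨D, fun i => (hD i).1, fun i => (hD i).2.1.1, fun i j hij => hDdisj hij,
    fun i => (hD i).2.1.card_inter_eq_one_or (hC2 i) (hC2' i)⟩

theorem extend_cliques {V : Type*} [Fintype V] [DecidableEq V] (G : SimpleGraph V)
    (b m t : ℕ) (hb : 1 ≤ b) (X : Fin m → Finset V)
    (hdisj : ∀ i j, i ≠ j → Disjoint (X i) (X j))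
    (hcover : ∀ v, ∃ i, v ∈ X i)
    (hdom : ∀ i j, i ≠ j → ∀ x ∈ X i,
      (X j).card - b ≤ ((X j : Set V) ∩ G.neighborSet x).ncard)
    (hsize : ∀ i, m * b + 2 * t ≤ (X i).card)
    (C : Fin t → Finset V) (hC : ∀ i, G.IsClique (C i : Set V))
    (hC2 : ∀ i j, (C i ∩ X j).card ≤ 2)
    (hC2' : ∀ i j j', (C i ∩ X j).card = 2 → (C i ∩ X j').card = 2 → j = j') :
    ∃ D : Fin t → Finset V,
      (∀ i, G.IsClique (D i : Set V)) ∧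
      (∀ i, C i ⊆ D i) ∧
      (∀ i j, i ≠ j → Disjoint (D i \ C i) (D j \ C j)) ∧
      (∀ i, (∀ j, (D i ∩ X j).card = 1) ∨
        ∃ j₀, (D i ∩ X j₀).card = 2 ∧ (C i ∩ X j₀).card = 2 ∧
          ∀ j, j ≠ j₀ → (D i ∩ X j).card = 1) :=
  extend_cliques_general G b m t X hdisj hcover hdom hsize C hC hC2 hC2'
end

section
/- Let G be a graph, K a clique of G containing a vertex v_0, vertex-disjoint from fixed cliques D_1,…,D_k except at v_0, and of maximum order among such cliques. Write V(K) = {v_0, v_1, …, v_s} and for each i ∈ {0,…,s} let X_i = (∩_{j≠i} N_G(v_j)) − V(∪_{j=1}^k D_j ∪ K). Then the sets X_0, …, X_s are pairwise disjoint, and for each i ≥ 1 the set X_i is an independent set in G. -/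
open SimpleGraph Finset

/-- The set `X_i = (⋂_{j ≠ i} N_G(v_j)) \ (V(⋃ D_l) ∪ V(K))`. -/
def Xset {V : Type*} (G : SimpleGraph V) {k s : ℕ} (D : Fin k → Finset V)
    (v : Fin (s + 1) → V) (i : Fin (s + 1)) : Set V :=
  (⋂ l ∈ ({i}ᶜ : Set (Fin (s + 1))), G.neighborSet (v l)) \
    ((⋃ l, (D l : Set V)) ∪ Set.range v)

/-! A vertex of `X_i ∩ X_j` with `i ≠ j` is adjacent to all of `K`, and an edge `ab` inside `X_i`
with `i ≠ 0` makes `K - v_i + a + b` a clique. Either clique still contains `v_0`, meets each `D_l`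
only in `v_0`, and is larger than `K`. -/

section

variable {V : Type*} {G : SimpleGraph V} {k s : ℕ} {D : Fin k → Finset V}
  {v : Fin (s + 1) → V}

lemma adj_of_mem_Xset {i l : Fin (s + 1)} {x : V} (hx : x ∈ Xset G D v i) (hl : l ≠ i) :
    G.Adj x (v l) :=
  (Set.mem_iInter₂.1 hx.1 l hl).symm

/-- `A ∪ v '' I` is a competitor of `K = Set.range v` in `hmax`. -/
lemma card_add_card_le_of_isClique_of_forall_adj [DecidableEq V] (hv : Function.Injective v)
    (hK : G.IsClique (Set.range v)) (hKD : ∀ l, (D l : Set V) ∩ Set.range v ⊆ {v 0})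
    (hmax : ∀ K' : Finset V, G.IsClique (K' : Set V) → v 0 ∈ K' →
      (∀ l, (K' : Set V) ∩ (D l : Set V) ⊆ {v 0}) → #K' ≤ s + 1)
    (A : Finset V) (I : Finset (Fin (s + 1))) (hI : 0 ∈ I) (hA : G.IsClique (A : Set V))
    (hAI : ∀ a ∈ A, ∀ l ∈ I, G.Adj a (v l))
    (hAout : ∀ a ∈ A, a ∉ (⋃ l, (D l : Set V)) ∪ Set.range v) :
    #A + #I ≤ s + 1 := by
  have hAK : Disjoint A (I.image v) :=
    disjoint_left.2 fun a ha hv' => hAout a ha <| Or.inr <| by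
      obtain ⟨l, -, rfl⟩ := mem_image.1 hv'
      exact Set.mem_range_self l
  have hIK : ((I.image v : Finset V) : Set V) ⊆ Set.range v := by
    simp only [coe_image]
    exact Set.image_subset_range v I
  have hclique : G.IsClique ((A ∪ I.image v : Finset V) : Set V) := by
    rw [coe_union, isClique_iff, Set.pairwise_union]
    refine ⟨hA, hK.subset hIK, fun a ha b hb _ => ?_⟩
    obtain ⟨l, hl, rfl⟩ := mem_image.1 hb
    exact ⟨hAI a ha l hl, (hAI a ha l hl).symm⟩
  have hcompat : ∀ l, ((A ∪ I.image v : Finset V) : Set V) ∩ (D l : Set V) ⊆ {v 0} := by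
    rintro l y ⟨hy, hyD⟩
    rcases mem_union.1 hy with hyA | hyK
    · exact absurd (Or.inl (Set.mem_iUnion.2 ⟨l, hyD⟩)) (hAout y hyA)
    · exact hKD l ⟨hyD, hIK hyK⟩
  have := hmax _ hclique (mem_union_right _ (mem_image_of_mem v hI)) hcompat
  rwa [card_union_of_disjoint hAK, card_image_of_injective I hv] at this

end

theorem Xsets_disjoint_and_independent_general {V : Type*}
    (G : SimpleGraph V) (k s : ℕ) (D : Fin k → Finset V) (v : Fin (s + 1) → V)
    (hv : Function.Injective v)
    (hK : G.IsClique (Set.range v))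
    (hKD : ∀ i, (D i : Set V) ∩ Set.range v = {v 0})
    (hmax : ∀ K' : Finset V, G.IsClique (K' : Set V) → v 0 ∈ K' →
      (∀ i, (K' : Set V) ∩ (D i : Set V) ⊆ {v 0}) → K'.card ≤ s + 1) :
    (∀ i j : Fin (s + 1), i ≠ j → Disjoint (Xset G D v i) (Xset G D v j)) ∧
    (∀ i : Fin (s + 1), i ≠ 0 →
      ∀ a ∈ Xset G D v i, ∀ b ∈ Xset G D v i, ¬ G.Adj a b) := by
  classical
  have key := card_add_card_le_of_isClique_of_forall_adj hv hK (fun l => (hKD l).le) hmax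
  refine ⟨fun i j hij => Set.disjoint_left.2 fun x hxi hxj => ?_,
    fun i hi a ha b hb hab => ?_⟩
  · have hx : ∀ l, G.Adj x (v l) := fun l =>
      if h : l = i then adj_of_mem_Xset hxj (h ▸ hij) else adj_of_mem_Xset hxi h
    have := key {x} univ (mem_univ 0) (by simp)
      (by simpa using hx) (by simpa using hxi.2)
    simp at this
  · have := key {a, b} (univ.erase i) (mem_erase.2 ⟨hi.symm, mem_univ 0⟩)
      (by simp [hab])
      (fun c hc l hl => by
        obtain rfl | rfl : c = a ∨ c = b := by simpa using hc
        exacts [adj_of_mem_Xset ha (ne_of_mem_erase hl),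
          adj_of_mem_Xset hb (ne_of_mem_erase hl)])
      (fun c hc => by
        obtain rfl | rfl : c = a ∨ c = b := by simpa using hc
        exacts [ha.2, hb.2])
    rw [card_pair hab.ne, card_erase_of_mem (mem_univ i), card_univ, Fintype.card_fin] at this
    omega

theorem Xsets_disjoint_and_independent {V : Type*} [Fintype V] [DecidableEq V]
    (G : SimpleGraph V) (k s : ℕ) (D : Fin k → Finset V) (v : Fin (s + 1) → V)
    (hv : Function.Injective v)
    (hclD : ∀ i, G.IsClique (D i : Set V)) (hv0D : ∀ i, v 0 ∈ D i)
    (hK : G.IsClique (Set.range v))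
    (hKD : ∀ i, (D i : Set V) ∩ Set.range v = {v 0})
    (hmax : ∀ K' : Finset V, G.IsClique (K' : Set V) → v 0 ∈ K' →
      (∀ i, (K' : Set V) ∩ (D i : Set V) ⊆ {v 0}) → K'.card ≤ s + 1) :
    (∀ i j : Fin (s + 1), i ≠ j → Disjoint (Xset G D v i) (Xset G D v j)) ∧
    (∀ i : Fin (s + 1), i ≠ 0 →
      ∀ a ∈ Xset G D v i, ∀ b ∈ Xset G D v i, ¬ G.Adj a b) :=
  Xsets_disjoint_and_independent_general G k s D v hv hK hKD hmax
end

section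
/- In the setting of the partition proof: with δ(G) > ((r−2)/(r−1))n − (k+1), if s is the number of non-center vertices of the maximum clique K (so the sets X_0,…,X_s are pairwise disjoint, X_i independent for i ≥ 1, and |X_i| ≥ ((r−1−s)/(r−1))n − (k+1)s − k(r−1) − s − 1), and G is F_{k+1,r}-free with n ≥ 4(k+1)²r⁴, then s = r − 2. -/
open SimpleGraph Finset

/-! If `s ≥ r - 1`, then `r - 1` vertices of `K - v₀` form a `(k+1)`-st petal next to
`D₁, …, D_k`, giving a copy of `F_{k+1,r}`. If `s ≤ r - 3`, the minimum degree is too large: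
for `s = 0` maximality of `K` confines the neighbourhood of `v₀` to `⋃ Dᵢ`, which has at most
`kr` vertices; for `s ≥ 1` the independent set `X₁` and the neighbourhood of one of its
vertices are disjoint, yet their sizes add up to more than `n`. -/

variable {V : Type*} {G : SimpleGraph V}

theorem hasCopy_fanGraph [DecidableEq V] {m r : ℕ} (c : V) (C : Fin m → Finset V)
    (hC : ∀ i, G.IsClique (C i : Set V)) (hc : ∀ i, c ∈ C i) (hcard : ∀ i, r ≤ (C i).card)
    (hCC : Pairwise fun i j => C i ∩ C j ⊆ {c}) :
    HasCopy (fanGraph m r) G := by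
  have emb : ∀ i, Fin (r - 1) ↪ (C i).erase c := fun i =>
    (Function.Embedding.nonempty_of_card_le (by
      simpa only [Fintype.card_fin, Fintype.card_coe, card_erase_of_mem (hc i)]
        using Nat.sub_le_sub_right (hcard i) 1)).some
  set e : Fin m × Fin (r - 1) → V := fun p => emb p.1 p.2
  have he_mem : ∀ p, e p ∈ (C p.1).erase c := fun p => (emb p.1 p.2).2
  have he_inj : Function.Injective e := by
    rintro ⟨i, j⟩ ⟨i', j'⟩ h
    obtain rfl : i = i' := by
      by_contra hii
      have := hCC hii (mem_inter.2 ⟨mem_of_mem_erase (he_mem (i, j)),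
        h ▸ mem_of_mem_erase (he_mem (i', j'))⟩)
      exact ne_of_mem_erase (he_mem (i, j)) (mem_singleton.1 this)
    exact Prod.ext rfl ((emb i).injective (Subtype.ext h))
  have hadj_center : ∀ p, G.Adj c (e p) := fun p =>
    hC p.1 (hc p.1) (mem_of_mem_erase (he_mem p)) (ne_of_mem_erase (he_mem p)).symm
  have hadj_block : ∀ p q, p.1 = q.1 → p ≠ q → G.Adj (e p) (e q) := by
    rintro ⟨i, j⟩ ⟨i', j'⟩ (rfl : i = i') hpq
    exact hC i (mem_of_mem_erase (he_mem _)) (mem_of_mem_erase (he_mem (i, j')))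
      (he_inj.ne hpq)
  -- vertex `j + 1` of the fan is vertex `j % (r - 1)` of petal `j / (r - 1)`
  set g : Fin ((r - 1) * m) → Fin m × Fin (r - 1) :=
    finProdFinEquiv.symm ∘ Fin.cast (Nat.mul_comm _ _)
  have hg : Function.Injective g := finProdFinEquiv.symm.injective.comp (Fin.cast_injective _)
  refine ⟨⟨Fin.cons c (e ∘ g), ?_⟩, Fin.cons_injective_iff.2 ⟨?_, he_inj.comp hg⟩⟩
  · intro u w huw
    rw [fanGraph, fromRel_adj] at huw
    obtain ⟨hne, hrel⟩ := huw
    cases u using Fin.cases <;> cases w using Fin.cases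
    · exact absurd rfl hne
    · exact hadj_center _
    · exact (hadj_center _).symm
    · rename_i u w
      refine hadj_block _ _ ?_ (hg.ne ((Fin.succ_injective _).ne_iff.1 hne))
      simp only [Fin.succ_ne_zero, Fin.val_succ, Nat.add_sub_cancel, false_or] at hrel
      exact Fin.ext (by simpa [g] using hrel.elim id Eq.symm)
  · rintro ⟨u, hu⟩
    exact ne_of_mem_erase (he_mem (g u)) hu

theorem hasCopy_fanGraph_succ [DecidableEq V] {k r : ℕ} (c : V) (D : Fin k → Finset V)
    (K : Finset V) (hD : ∀ i, G.IsClique (D i : Set V)) (hK : G.IsClique (K : Set V))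
    (hcD : ∀ i, c ∈ D i) (hcK : c ∈ K) (hcardD : ∀ i, r ≤ (D i).card) (hcardK : r ≤ K.card)
    (hDD : Pairwise fun i j => D i ∩ D j ⊆ {c}) (hKD : ∀ i, (D i : Set V) ∩ K ⊆ {c}) :
    HasCopy (fanGraph (k + 1) r) G := by
  refine hasCopy_fanGraph c (Fin.cons K D) (Fin.cases hK hD) (Fin.cases hcK hcD)
    (Fin.cases hcardK hcardD) ?_
  intro i j hij
  cases i using Fin.cases <;> cases j using Fin.cases
  · exact absurd rfl hij
  · simpa only [Fin.cons_zero, Fin.cons_succ, ← coe_subset, coe_inter, coe_singleton,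
      Set.inter_comm] using hKD _
  · simpa only [Fin.cons_zero, Fin.cons_succ, ← coe_subset, coe_inter, coe_singleton]
      using hKD _
  · exact hDD fun h => hij (congrArg Fin.succ h)

theorem ncard_neighborSet_le_sum_card [DecidableEq V] {ι : Type*} [Fintype ι] (D : ι → Finset V)
    (c : V) (hmax : ∀ K : Finset V, G.IsClique (K : Set V) → c ∈ K →
      (∀ i, (K : Set V) ∩ (D i : Set V) ⊆ {c}) → K.card ≤ 1) :
    (G.neighborSet c).ncard ≤ ∑ i, (D i).card := by
  have hsub : G.neighborSet c ⊆ (univ.biUnion D : Finset V) := by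
    intro u hu
    by_contra hu'
    simp only [coe_biUnion, coe_univ, Set.mem_univ, Set.iUnion_true, Set.mem_iUnion,
      mem_coe, not_exists] at hu'
    have hcu : c ≠ u := G.ne_of_adj hu
    have hpair := hmax {c, u} (by simpa using isClique_pair.2 fun _ => hu) (mem_insert_self _ _)
      (fun i x ⟨hx, hxD⟩ => by
        rcases (by simpa using hx : x = c ∨ x = u) with rfl | rfl
        · rfl
        · exact absurd hxD (hu' i))
    rw [card_pair hcu] at hpair
    omega
  calc (G.neighborSet c).ncard ≤ (univ.biUnion D).card :=
        (Set.ncard_le_ncard hsub).trans_eq (Set.ncard_coe_finset _)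
    _ ≤ ∑ i, (D i).card := card_biUnion_le

theorem SimpleGraph.IsIndepSet.exists_ncard_neighborSet_add_ncard_le [Finite V] [Nonempty V]
    {X : Set V} (hX : G.IsIndepSet X) : ∃ a, (G.neighborSet a).ncard + X.ncard ≤ Nat.card V := by
  obtain rfl | ⟨a, ha⟩ := X.eq_empty_or_nonempty
  · exact ⟨Classical.arbitrary V, by simpa using Set.ncard_le_card _⟩
  · refine ⟨a, ?_⟩
    have hdisj : Disjoint (G.neighborSet a) X := Set.disjoint_left.2 fun b hab hb =>
      hX ha hb (G.ne_of_adj hab) hab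
    rw [← Set.ncard_union_eq hdisj]
    exact Set.ncard_le_card _

theorem SimpleGraph.IsIndepSet.ncard_lt_sub [Finite V] [Nonempty V] {X : Set V} {t : ℝ}
    (hX : G.IsIndepSet X) (hδ : ∀ a, t < (G.neighborSet a).ncard) :
    (X.ncard : ℝ) < Nat.card V - t := by
  obtain ⟨a, ha⟩ := hX.exists_ncard_neighborSet_add_ncard_le
  have : ((G.neighborSet a).ncard : ℝ) + X.ncard ≤ Nat.card V := by exact_mod_cast ha
  linarith [hδ a]

theorem two_mul_succ_mul_lt_div_mul {k r n t : ℝ} (hk : 0 ≤ k) (hr : 2 ≤ r) (ht : 1 ≤ t)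
    (hn : 4 * (k + 1) ^ 2 * r ^ 4 ≤ n) : 2 * (k + 1) * r < t / (r - 1) * n := by
  have hn0 : 0 ≤ n := le_trans (by positivity) hn
  rw [div_mul_eq_mul_div, lt_div_iff₀ (by linarith)]
  calc 2 * (k + 1) * r * (r - 1) < 2 * (k + 1) * r ^ 2 := by nlinarith
    _ ≤ (2 * (k + 1) * r ^ 2) ^ 2 := by
        have : 1 ≤ 2 * (k + 1) * r ^ 2 := by nlinarith
        nlinarith
    _ = 4 * (k + 1) ^ 2 * r ^ 4 := by ring
    _ ≤ t * n := by nlinarith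

theorem clique_size_eq_general (k r n s : ℕ) (hr : 4 ≤ r)
    (hn : 4 * (k + 1)^2 * r^4 ≤ n) (G : SimpleGraph (Fin n))
    (hfree : ¬ HasCopy (fanGraph (k + 1) r) G)
    (hδ : ∀ v, ((r : ℝ) - 2) / ((r : ℝ) - 1) * n - (k + 1) < ((G.neighborSet v).ncard : ℝ))
    (D : Fin k → Finset (Fin n)) (v : Fin (s + 1) → Fin n)
    (hv : Function.Injective v)
    (hclD : ∀ i, G.IsClique (D i : Set (Fin n))) (hcardD : ∀ i, (D i).card = r)
    (hv0D : ∀ i, v 0 ∈ D i) (hDD : ∀ i j, i ≠ j → D i ∩ D j = {v 0})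
    (hK : G.IsClique (Set.range v))
    (hKD : ∀ i, (D i : Set (Fin n)) ∩ Set.range v = {v 0})
    (hmax : ∀ K' : Finset (Fin n), G.IsClique (K' : Set (Fin n)) → v 0 ∈ K' →
      (∀ i, (K' : Set (Fin n)) ∩ (D i : Set (Fin n)) ⊆ {v 0}) → K'.card ≤ s + 1)
    (hXind : ∀ i : Fin (s + 1), i ≠ 0 →
      ∀ a ∈ Xset G D v i, ∀ b ∈ Xset G D v i, ¬ G.Adj a b)
    (hXsize : ∀ i, ((r : ℝ) - 1 - s) / ((r : ℝ) - 1) * n - (k + 1) * s - k * (r - 1) - s - 1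
      ≤ ((Xset G D v i).ncard : ℝ)) :
    s = r - 2 := by
  have hcoeK : ((univ.image v : Finset (Fin n)) : Set (Fin n)) = Set.range v := by simp
  have hsr : s ≤ r - 2 := by
    by_contra h
    refine hfree (hasCopy_fanGraph_succ (v 0) D (univ.image v) hclD (hcoeK ▸ hK) hv0D
      (mem_image_of_mem v (mem_univ 0)) (fun i => (hcardD i).ge)
      (by rw [card_image_of_injective _ hv, card_univ, Fintype.card_fin]; omega)
      (fun i j hij => (hDD i j hij).le) fun i => by rw [hcoeK, hKD])
  by_contra hne
  have hrR : (4 : ℝ) ≤ r := by exact_mod_cast hr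
  have hsr' : (s : ℝ) + 3 ≤ r := by norm_cast; omega
  have hgap : 2 * ((k : ℝ) + 1) * r < ((r : ℝ) - 2 - s) / ((r : ℝ) - 1) * n :=
    two_mul_succ_mul_lt_div_mul (by positivity) (by linarith) (by linarith)
      (by exact_mod_cast hn)
  rcases Nat.eq_zero_or_pos s with rfl | hs
  · have hdeg := ncard_neighborSet_le_sum_card D (v 0) hmax
    simp only [hcardD, sum_const, card_univ, Fintype.card_fin, smul_eq_mul] at hdeg
    have := hδ (v 0)
    have : ((G.neighborSet (v 0)).ncard : ℝ) ≤ k * r := by exact_mod_cast hdeg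
    simp only [CharP.cast_eq_zero, sub_zero] at hgap
    nlinarith
  · set i : Fin (s + 1) := ⟨1, by omega⟩
    have : Nonempty (Fin n) := ⟨v 0⟩
    have hind : G.IsIndepSet (Xset G D v i) := fun x hx y hy _ =>
      hXind i (Fin.ne_of_val_ne (by simp [i])) x hx y hy
    have hX := hind.ncard_lt_sub hδ
    rw [Nat.card_eq_fintype_card, Fintype.card_fin] at hX
    have hsplit : ((r : ℝ) - 2) / ((r : ℝ) - 1) * n + ((r : ℝ) - 1 - s) / ((r : ℝ) - 1) * n
        = n + ((r : ℝ) - 2 - s) / ((r : ℝ) - 1) * n := by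
      field_simp [show (r : ℝ) - 1 ≠ 0 by linarith]
      ring
    nlinarith [hXsize i]

theorem clique_size_eq (k r n s : ℕ) (hk : 1 ≤ k) (hr : 4 ≤ r)
    (hn : 4 * (k + 1)^2 * r^4 ≤ n) (G : SimpleGraph (Fin n))
    (hfree : ¬ HasCopy (fanGraph (k + 1) r) G)
    (hδ : ∀ v, ((r : ℝ) - 2) / ((r : ℝ) - 1) * n - (k + 1) < ((G.neighborSet v).ncard : ℝ))
    (D : Fin k → Finset (Fin n)) (v : Fin (s + 1) → Fin n)
    (hv : Function.Injective v)
    (hclD : ∀ i, G.IsClique (D i : Set (Fin n))) (hcardD : ∀ i, (D i).card = r)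
    (hv0D : ∀ i, v 0 ∈ D i) (hDD : ∀ i j, i ≠ j → D i ∩ D j = {v 0})
    (hK : G.IsClique (Set.range v))
    (hKD : ∀ i, (D i : Set (Fin n)) ∩ Set.range v = {v 0})
    (hmax : ∀ K' : Finset (Fin n), G.IsClique (K' : Set (Fin n)) → v 0 ∈ K' →
      (∀ i, (K' : Set (Fin n)) ∩ (D i : Set (Fin n)) ⊆ {v 0}) → K'.card ≤ s + 1)
    (hXdisj : ∀ i j : Fin (s + 1), i ≠ j → Disjoint (Xset G D v i) (Xset G D v j))
    (hXind : ∀ i : Fin (s + 1), i ≠ 0 →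
      ∀ a ∈ Xset G D v i, ∀ b ∈ Xset G D v i, ¬ G.Adj a b)
    (hXsize : ∀ i, ((r : ℝ) - 1 - s) / ((r : ℝ) - 1) * n - (k + 1) * s - k * (r - 1) - s - 1
      ≤ ((Xset G D v i).ncard : ℝ)) :
    s = r - 2 :=
  clique_size_eq_general k r n s hr hn G hfree hδ D v hv hclD hcardD hv0D hDD hK hKD hmax hXind
    hXsize
end

section
/- By Turán's theorem, for n ≥ r − 1 ≥ 1, ex(n, K_r) = ((r−2)/(2(r−1)))n² − ε, where ε = l(r−1−l)/(2(r−1)) and l ∈ {0, 1, …, r−2} satisfies l ≡ n (mod r−1). Moreover 0 ≤ ε ≤ (r−1)/8, and ε = 0 if and only if (r−1) divides n. -/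
open SimpleGraph Finset

/-! By Turán's theorem (`extremalNumber_top` in Mathlib), `ex(n, K_r)` is the number of edges of
`turanGraph n (r - 1)`. Mathlib's closed form for that number uses truncated division; over `ℝ`
the formula `(r-2)/(2(r-1)) n² - ε` follows by induction in steps of `r - 1`, since adding `r - 1`
vertices (one to each part) adds `n (r - 2) + C(r - 1, 2)` edges and leaves `n mod (r - 1)`
unchanged, while for `n < r - 1` the Turán graph is complete. The bounds on `ε` are AM-GM for
`l (r - 1 - l)`. -/

lemma hasCopy_iff_isContained {V W : Type*} {H : SimpleGraph W} {G : SimpleGraph V} :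
    HasCopy H G ↔ H ⊑ G :=
  ⟨fun ⟨f, hf⟩ ↦ ⟨⟨f, hf⟩⟩, fun ⟨f⟩ ↦ ⟨f.toHom, f.injective⟩⟩

lemma edgeCount_eq_card_edgeFinset {V : Type*} [Fintype V] (G : SimpleGraph V)
    [DecidableRel G.Adj] : edgeCount G = #G.edgeFinset := by
  rw [edgeCount, ← coe_edgeFinset, Set.ncard_coe_finset]

lemma exNum_eq_extremalNumber (n : ℕ) {W : Type*} (H : SimpleGraph W) :
    exNum n H = extremalNumber n H := by
  classical
  have hbound : extremalNumber n H ∈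
      upperBounds {m | ∃ G : SimpleGraph (Fin n), ¬ HasCopy H G ∧ m = edgeCount G} := by
    rintro _ ⟨G, hG, rfl⟩
    rw [edgeCount_eq_card_edgeFinset]
    simpa only [Fintype.card_fin] using
      card_edgeFinset_le_extremalNumber (hasCopy_iff_isContained.not.mp hG)
  refine le_antisymm (csSup_le' hbound) (Finset.sup_le fun G hG ↦ le_csSup ⟨_, hbound⟩ ?_)
  exact ⟨G, hasCopy_iff_isContained.not.mpr (mem_filter.mp hG).2,
    (edgeCount_eq_card_edgeFinset G).symm⟩

theorem cast_card_edgeFinset_turanGraph {n r : ℕ} (hr : 0 < r) :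
    (#(turanGraph n r).edgeFinset : ℝ) =
      (r - 1) / (2 * r) * n ^ 2 - (n % r : ℕ) * (r - (n % r : ℕ)) / (2 * r) := by
  have hr' : (r : ℝ) ≠ 0 := by positivity
  induction n using Nat.strong_induction_on with
  | _ n ih =>
    rcases lt_or_ge n r with hnr | hrn
    · rw [card_edgeFinset_turanGraph, Nat.mod_eq_of_lt hnr, tsub_self, zero_mul, Nat.zero_div,
        zero_add, Nat.cast_choose_two]
      field_simp
      ring
    · obtain ⟨m, rfl⟩ := Nat.exists_eq_add_of_le' hrn
      rw [card_edgeFinset_turanGraph_add, Nat.add_mod_right]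
      push_cast [Nat.cast_pred hr, Nat.cast_choose_two]
      rw [ih m (by omega)]
      field_simp
      ring

theorem turan_eps_general (n r : ℕ) (hr : 2 ≤ r) :
    ∀ l : ℕ, l = n % (r - 1) →
    ∀ ε : ℝ, ε = ((l : ℝ) * ((r : ℝ) - 1 - l)) / (2 * ((r : ℝ) - 1)) →
    (exNum n (⊤ : SimpleGraph (Fin r)) : ℝ)
        = ((r : ℝ) - 2) / (2 * ((r : ℝ) - 1)) * (n : ℝ)^2 - ε ∧
      0 ≤ ε ∧ ε ≤ ((r : ℝ) - 1) / 8 ∧ (ε = 0 ↔ (r - 1) ∣ n) := by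
  rintro l rfl ε rfl
  have : Nontrivial (Fin r) := Fin.nontrivial_iff_two_le.mpr hr
  have hr₁ : ((r - 1 : ℕ) : ℝ) = r - 1 := by rw [Nat.cast_pred (by omega)]
  have hl : ((n % (r - 1) : ℕ) : ℝ) < r - 1 := by
    rw [← hr₁]; exact_mod_cast Nat.mod_lt _ (by omega)
  have hl₀ : (0 : ℝ) ≤ (n % (r - 1) : ℕ) := Nat.cast_nonneg _
  refine ⟨?_, div_nonneg (mul_nonneg hl₀ (by linarith)) (by linarith), ?_, ?_⟩
  · rw [exNum_eq_extremalNumber, extremalNumber_top, Fintype.card_fin,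
      cast_card_edgeFinset_turanGraph (by omega), hr₁]
    ring
  · rw [div_le_div_iff₀ (by linarith) (by norm_num)]
    nlinarith [sq_nonneg ((r : ℝ) - 1 - 2 * (n % (r - 1) : ℕ))]
  · rw [div_eq_zero_iff, mul_eq_zero, Nat.dvd_iff_mod_eq_zero, Nat.cast_eq_zero]
    constructor
    · rintro ((h | h) | h) <;> [exact h; linarith; linarith]
    · exact fun h ↦ .inl (.inl h)

theorem turan_eps (n r : ℕ) (hr : 2 ≤ r) (hn : r - 1 ≤ n) :
    ∀ l : ℕ, l = n % (r - 1) →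
    ∀ ε : ℝ, ε = ((l : ℝ) * ((r : ℝ) - 1 - l)) / (2 * ((r : ℝ) - 1)) →
    (exNum n (⊤ : SimpleGraph (Fin r)) : ℝ)
        = ((r : ℝ) - 2) / (2 * ((r : ℝ) - 1)) * (n : ℝ)^2 - ε ∧
      0 ≤ ε ∧ ε ≤ ((r : ℝ) - 1) / 8 ∧ (ε = 0 ↔ (r - 1) ∣ n) :=
  turan_eps_general n r hr
end
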